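/- arXiv:math/9605234 — 2 statements merged into one kernel-verified Lean document; each statement's English description precedes it below -/
import Mathlib

section
/- Let κ < λ be regular cardinals with θ^κ < λ for every θ < λ, and let D be a normal filter on λ that is κ-presaturated and satisfies {i < λ : cf(i) ≥ κ} ∈ D. Then for every κ₀ < κ, every family of maximal antichains I_α = {A_i^α : i < i_α} of D⁺ (α < κ₀), and every B ∈ D⁺, there exists A** ∈ D⁺ with A** ⊆ B such that for every α < κ₀ there is exactly one i < i_α with A** ∩ A_i^α ∈ D⁺. -/
open Set Cardinal

noncomputable section

/-! ## Normal filters on the ordinals below `lam`, positive sets, antichains,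
presaturation (Baumgartner–Taylor / Gitik–Shelah) -/

/-- A normal filter on (the set of ordinals below) `lam`:  a proper,
`lam`-complete filter on `Set.Iio lam` containing all final segments and closed
under diagonal intersections. -/
structure NormalFilterOn (lam : Ordinal.{0}) where
  sets : Set (Set Ordinal.{0})
  subset_field : ∀ A ∈ sets, A ⊆ Set.Iio lam
  superset_mem : ∀ A ∈ sets, ∀ B, B ⊆ Set.Iio lam → A ⊆ B → B ∈ sets
  inter_mem : ∀ A ∈ sets, ∀ B ∈ sets, A ∩ B ∈ sets
  tail_mem : ∀ a, a < lam → {x : Ordinal.{0} | a ≤ x ∧ x < lam} ∈ sets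
  complete : ∀ b, b < lam → ∀ s : Ordinal.{0} → Set Ordinal.{0},
    (∀ i, i < b → s i ∈ sets) → {x : Ordinal.{0} | x < lam ∧ ∀ i, i < b → x ∈ s i} ∈ sets
  diagonal : ∀ s : Ordinal.{0} → Set Ordinal.{0}, (∀ i, i < lam → s i ∈ sets) →
    {x : Ordinal.{0} | x < lam ∧ ∀ i, i < x → x ∈ s i} ∈ sets
  proper : ∅ ∉ sets

/-- `A` is `D`-positive, i.e. `A ∈ D⁺`. -/
def NormalFilterOn.pos {lam : Ordinal.{0}} (D : NormalFilterOn lam) (A : Set Ordinal.{0}) : Prop :=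
  A ⊆ Set.Iio lam ∧ (Set.Iio lam \ A) ∉ D.sets

/-- `A` has cardinality at most `|c|` (it injects into the ordinals below `c`). -/
def SizeLE {α : Type*} (A : Set α) (c : Ordinal.{0}) : Prop :=
  ∃ g : α → Ordinal.{0}, (∀ x ∈ A, g x < c) ∧ ∀ x ∈ A, ∀ y ∈ A, g x = g y → x = y

/-- `A` has cardinality less than `|c|`. -/
def SizeLT {α : Type*} (A : Set α) (c : Ordinal.{0}) : Prop :=
  ∃ b, b < c ∧ SizeLE A b

/-- `⟨A i : i < i0⟩` is a maximal antichain of `D⁺`. -/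
def IsMaxAntichainPos {lam : Ordinal.{0}} (D : NormalFilterOn lam) (i0 : Ordinal.{0})
    (A : Ordinal.{0} → Set Ordinal.{0}) : Prop :=
  (∀ i, i < i0 → D.pos (A i)) ∧
  (∀ i, i < i0 → ∀ j, j < i0 → i ≠ j → ¬ D.pos (A i ∩ A j)) ∧
  (∀ B, D.pos B → ∃ i, i < i0 ∧ D.pos (B ∩ A i))

/-- A family of sets forming a maximal antichain of `D⁺`. -/
def IsMaxAntichainSet {lam : Ordinal.{0}} (D : NormalFilterOn lam) (S : Set (Set Ordinal.{0})) : Prop :=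
  (∀ A ∈ S, D.pos A) ∧
  (∀ A ∈ S, ∀ B ∈ S, A ≠ B → ¬ D.pos (A ∩ B)) ∧
  (∀ B, D.pos B → ∃ A ∈ S, D.pos (B ∩ A))

/-- `D` is `kappa`-presaturated (Definition 1.2):  given fewer than `kappa` many
maximal antichains of `D⁺` and a positive `B`, some positive `A* ⊆ B` meets at
most `lam` many members of each antichain positively. -/
def Presaturated {lam : Ordinal.{0}} (D : NormalFilterOn lam) (kappa : Ordinal.{0}) : Prop :=
  ∀ k0, k0 < kappa →
    ∀ (idx : Ordinal.{0} → Ordinal.{0}) (A : Ordinal.{0} → Ordinal.{0} → Set Ordinal.{0}),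
      (∀ a, a < k0 → IsMaxAntichainPos D (idx a) (A a)) →
      ∀ B, D.pos B → ∃ Astar, D.pos Astar ∧ Astar ⊆ B ∧
        ∀ a, a < k0 → SizeLE {i : Ordinal.{0} | i < idx a ∧ D.pos (Astar ∩ A a i)} lam

/-! ## Clubs and stationary sets -/

/-- `c` is closed and unbounded in `d`. -/
def ClubIn (c : Set Ordinal.{0}) (d : Ordinal.{0}) : Prop :=
  (∀ b, b < d → ∃ i, i ∈ c ∧ b < i ∧ i < d) ∧
  (∀ x, x < d → x ≠ 0 → (∀ b, b < x → ∃ i, i ∈ c ∧ b < i ∧ i < x) → x ∈ c)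

/-- `A` is stationary in `d`. -/
def StatIn (A : Set Ordinal.{0}) (d : Ordinal.{0}) : Prop :=
  ∀ c, ClubIn c d → ∃ i, i ∈ c ∧ i ∈ A ∧ i < d

/-! ## Forcing notions, names for sets of ordinals, and the forcing relation
(dense-set semantics).  `le p q` means that `q` extends (is stronger than) `p`. -/

structure ForcingNotion where
  Cond : Type 1
  le : Cond → Cond → Prop
  le_refl : ∀ p, le p p
  le_trans : ∀ {p q r}, le p q → le q r → le p r
  one : Cond
  one_le : ∀ p, le one p

/-- A name for a set of ordinals: `σ i` is the set of conditions forcing `i ∈ σ`. -/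
def SetName (P : ForcingNotion) : Type 1 := Ordinal.{0} → Set P.Cond

def IsSetName (P : ForcingNotion) (σ : SetName P) : Prop :=
  ∀ i p q, p ∈ σ i → P.le p q → q ∈ σ i

/-- `q ⊩ i ∈ σ`. -/
def ForcesMem (P : ForcingNotion) (q : P.Cond) (σ : SetName P) (i : Ordinal.{0}) : Prop :=
  ∀ r, P.le q r → ∃ s, P.le r s ∧ s ∈ σ i

/-- `q ⊩ i ∉ σ`. -/
def ForcesNotMem (P : ForcingNotion) (q : P.Cond) (σ : SetName P) (i : Ordinal.{0}) : Prop :=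
  ∀ r, P.le q r → r ∉ σ i

/-- The canonical name of a ground-model set of ordinals. -/
def groundName (P : ForcingNotion) (A : Set Ordinal.{0}) : SetName P := fun i => {_s | i ∈ A}

/-- The name of the intersection of two names. -/
def interName (P : ForcingNotion) (σ τ : SetName P) : SetName P :=
  fun i => {s | ForcesMem P s σ i ∧ ForcesMem P s τ i}

/-- `q ⊩ σ ∈ (D^Q)⁺`, where `D^Q` is the filter that `D` generates in `V^Q`. -/
def ForcesPos {lam : Ordinal.{0}} (P : ForcingNotion) (D : NormalFilterOn lam)
    (q : P.Cond) (σ : SetName P) : Prop :=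
  ∀ C ∈ D.sets, ∀ r, P.le q r → ∃ s, P.le r s ∧ ∃ i ∈ C, ForcesMem P s σ i

/-- `q ⊩ σ = ∅ mod D^Q` (equivalently `q ⊩ σ ∉ (D^Q)⁺`). -/
def ForcesNotPos {lam : Ordinal.{0}} (P : ForcingNotion) (D : NormalFilterOn lam)
    (q : P.Cond) (σ : SetName P) : Prop :=
  ∀ r, P.le q r → ∃ s, P.le r s ∧ ∃ C ∈ D.sets, ∀ i ∈ C, ForcesNotMem P s σ i

/-- `q ⊩ σ ⊆ τ`. -/
def ForcesSubset (P : ForcingNotion) (q : P.Cond) (σ τ : SetName P) : Prop :=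
  ∀ i t, P.le q t → ForcesMem P t σ i → ForcesMem P t τ i

/-- `q ⊩ σ ⊆ τ mod D^Q`. -/
def ForcesSubsetMod {lam : Ordinal.{0}} (P : ForcingNotion) (D : NormalFilterOn lam)
    (q : P.Cond) (σ τ : SetName P) : Prop :=
  ∀ r, P.le q r → ∃ s, P.le r s ∧ ∃ C ∈ D.sets,
    ∀ i ∈ C, ∀ t, P.le s t → ForcesMem P t σ i → ForcesMem P t τ i

/-! ## Forced maximal antichains, and presaturation of `D^Q` in `V^Q` -/

/-- `q` forces that `⟨A i : i < idx⟩` is a maximal antichain of `(D^Q)⁺`. -/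
def ForcedMaxAntichain {lam : Ordinal.{0}} (P : ForcingNotion) (D : NormalFilterOn lam)
    (q : P.Cond) (idx : Ordinal.{0}) (A : Ordinal.{0} → SetName P) : Prop :=
  (∀ i, i < idx → ForcesPos P D q (A i)) ∧
  (∀ i, i < idx → ∀ j, j < idx → i ≠ j → ForcesNotPos P D q (interName P (A i) (A j))) ∧
  (∀ B : SetName P, ∀ r, P.le q r → ForcesPos P D r B →
    ∃ s, P.le r s ∧ ∃ i, i < idx ∧ ForcesPos P D s (interName P (A i) B))

/-- `D^Q` is `kappa`-presaturated in `V^Q`. -/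
def ForcedPresaturated {lam : Ordinal.{0}} (P : ForcingNotion) (D : NormalFilterOn lam)
    (kappa : Ordinal.{0}) : Prop :=
  ∀ (q : P.Cond) (k0 : Ordinal.{0}), k0 < kappa →
    ∀ (idx : Ordinal.{0} → Ordinal.{0}) (A : Ordinal.{0} → Ordinal.{0} → SetName P),
      (∀ a, a < k0 → ForcedMaxAntichain P D q (idx a) (A a)) →
      ∀ B : SetName P, ForcesPos P D q B →
        ∀ r, P.le q r → ∃ s, P.le r s ∧ ∃ Astar : SetName P,
          ForcesPos P D s Astar ∧ ForcesSubsetMod P D s Astar B ∧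
          ∀ a, a < k0 → ∃ Y : Set Ordinal.{0}, SizeLE Y lam ∧
            ∀ i, i < idx a → i ∉ Y → ForcesNotPos P D s (interName P Astar (A a i))

/-! ## Completeness of forcings, names of functions, preservation of cardinals -/

/-- `P` is `kappa`-complete (`kappa`-closed): increasing chains of length `< kappa`
have upper bounds. -/
def KappaClosed (P : ForcingNotion) (kappa : Ordinal.{0}) : Prop :=
  ∀ d, d < kappa → ∀ c : Ordinal.{0} → P.Cond,
    (∀ i j, i ≤ j → j < d → P.le (c i) (c j)) → ∃ ub, ∀ i, i < d → P.le (c i) ub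

/-- `F` is (below `q`) a name of a function with domain `mu`:
`F x i` is the set of conditions forcing the value at `x` to be `i`. -/
def IsFunName (P : ForcingNotion) (q : P.Cond) (mu : Ordinal.{0})
    (F : Ordinal.{0} → Ordinal.{0} → Set P.Cond) : Prop :=
  (∀ x i p r, p ∈ F x i → P.le p r → r ∈ F x i) ∧
  (∀ x, x < mu → ∀ r, P.le q r → ∃ s, P.le r s ∧ ∃ i, s ∈ F x i) ∧
  (∀ x i j s, s ∈ F x i → s ∈ F x j → i = j)

/-- `q` forces `F` to be a function from `mu` cofinally into `lam`. -/
def ForcesCofinalInto (P : ForcingNotion) (q : P.Cond) (mu lam : Ordinal.{0})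
    (F : Ordinal.{0} → Ordinal.{0} → Set P.Cond) : Prop :=
  IsFunName P q mu F ∧ (∀ x i s, s ∈ F x i → i < lam) ∧
  (∀ b, b < lam → ∀ r, P.le q r → ∃ s, P.le r s ∧ ∃ x, x < mu ∧ ∃ i, b ≤ i ∧ s ∈ F x i)

/-- `⊩_P "lam is regular"`. -/
def ForcesRegular (P : ForcingNotion) (lam : Ordinal.{0}) : Prop :=
  ∀ q mu F, mu < lam → ¬ ForcesCofinalInto P q mu lam F

/-- `q` forces `F` to be a surjection from `mu` onto `nu`. -/
def ForcesOnto (P : ForcingNotion) (q : P.Cond) (mu nu : Ordinal.{0})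
    (F : Ordinal.{0} → Ordinal.{0} → Set P.Cond) : Prop :=
  IsFunName P q mu F ∧ (∀ x i s, s ∈ F x i → i < nu) ∧
  (∀ i, i < nu → ∀ r, P.le q r → ∃ s, P.le r s ∧ ∃ x, x < mu ∧ s ∈ F x i)

/-- `⊩_P "nu remains a cardinal"`. -/
def PreservesCardinalForced (P : ForcingNotion) (nu : Ordinal.{0}) : Prop :=
  ∀ q mu F, mu < nu → ¬ ForcesOnto P q mu nu F

/-! ## Forced clubs and stationarity -/

/-- `q` forces the name `C` to be a club in `d`. -/
def ForcesClubIn (P : ForcingNotion) (q : P.Cond) (C : SetName P) (d : Ordinal.{0}) : Prop :=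
  (∀ b, b < d → ∀ r, P.le q r → ∃ s, P.le r s ∧ ∃ i, b < i ∧ i < d ∧ ForcesMem P s C i) ∧
  (∀ x, x < d → x ≠ 0 → ∀ s, P.le q s →
    (∀ b, b < x → ∀ t, P.le s t → ∃ u, P.le t u ∧ ∃ i, b < i ∧ i < x ∧ ForcesMem P u C i) →
    ForcesMem P s C x)

/-- `q ⊩ "σ is a stationary subset of d"`. -/
def ForcesStatIn (P : ForcingNotion) (q : P.Cond) (σ : SetName P) (d : Ordinal.{0}) : Prop :=
  ∀ r, P.le q r → ∀ C : SetName P, ForcesClubIn P r C d →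
    ∃ s, P.le r s ∧ ∃ i, i < d ∧ ForcesMem P s σ i ∧ ForcesMem P s C i

/-- `q ⊩ "σ ∩ d is nonstationary in d"`. -/
def ForcesNonstatIn (P : ForcingNotion) (q : P.Cond) (σ : SetName P) (d : Ordinal.{0}) : Prop :=
  ∀ r, P.le q r → ∃ s, P.le r s ∧ ∃ C : SetName P, ForcesClubIn P s C d ∧
    ∀ i, i < d → ∀ t, P.le s t → ¬ (ForcesMem P t σ i ∧ ForcesMem P t C i)

/-- `P` preserves stationarity of every `D`-positive set. -/
def PreservesStationarity {lam : Ordinal.{0}} (P : ForcingNotion) (D : NormalFilterOn lam) : Prop :=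
  ∀ A, D.pos A → ∀ q, ForcesStatIn P q (groundName P A) lam

/-! ## The games `Gm(D,γ,a)` and `Gm⁺(D,γ,a)` of Definition 1.7 -/

def restrictPlay (f : Ordinal.{0} → Set Ordinal.{0}) (i : Ordinal.{0}) : Ordinal.{0} → Set Ordinal.{0} :=
  fun j => if j < i then f j else ∅

/-- The move `A` is legal at stage `i` of a play `f`:  it is `D`-positive and
included mod `D` in all previous moves. -/
def LegalMove {lam : Ordinal.{0}} (D : NormalFilterOn lam) (f : Ordinal.{0} → Set Ordinal.{0})
    (i : Ordinal.{0}) (A : Set Ordinal.{0}) : Prop :=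
  D.pos A ∧ ∀ j, j < i → ¬ D.pos (A \ f j)

def LegalBelow {lam : Ordinal.{0}} (D : NormalFilterOn lam) (f : Ordinal.{0} → Set Ordinal.{0})
    (i : Ordinal.{0}) : Prop :=
  ∀ j, j < i → LegalMove D f j (f j)

/-- Player II has a winning strategy in `Gm(D,γ,a)` (player I moves at stages in `a`). -/
def IIWinsGm {lam : Ordinal.{0}} (D : NormalFilterOn lam) (γ : Ordinal.{0}) (a : Set Ordinal.{0}) : Prop :=
  ∃ S : Ordinal.{0} → (Ordinal.{0} → Set Ordinal.{0}) → Set Ordinal.{0},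
    ∀ f : Ordinal.{0} → Set Ordinal.{0},
      (∀ i, i < γ → i ∉ a → f i = S i (restrictPlay f i)) →
      (∀ i, i < γ → i ∈ a → LegalBelow D f i → (∃ A, LegalMove D f i A) →
        LegalMove D f i (f i)) →
      ∀ i, i < γ → LegalBelow D f i → LegalMove D f i (f i)

/-- Player II has a winning strategy in `Gm⁺(D,γ,a)`:  in addition the
intersection of the moves must be nonempty. -/
def IIWinsGmPlus {lam : Ordinal.{0}} (D : NormalFilterOn lam) (γ : Ordinal.{0}) (a : Set Ordinal.{0}) : Prop :=
  ∃ S : Ordinal.{0} → (Ordinal.{0} → Set Ordinal.{0}) → Set Ordinal.{0},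
    ∀ f : Ordinal.{0} → Set Ordinal.{0},
      (∀ i, i < γ → i ∉ a → f i = S i (restrictPlay f i)) →
      (∀ i, i < γ → i ∈ a → LegalBelow D f i → (∃ A, LegalMove D f i A) →
        LegalMove D f i (f i)) →
      (∀ i, i < γ → LegalBelow D f i → LegalMove D f i (f i)) ∧
      ((∀ i, i < γ → LegalMove D f i (f i)) → ∃ x, ∀ i, i < γ → x ∈ f i)

/-- Player I has a winning strategy in `Gm(D,γ,a)`. -/
def IWinsGm {lam : Ordinal.{0}} (D : NormalFilterOn lam) (γ : Ordinal.{0}) (a : Set Ordinal.{0}) : Prop :=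
  ∃ S : Ordinal.{0} → (Ordinal.{0} → Set Ordinal.{0}) → Set Ordinal.{0},
    ∀ f : Ordinal.{0} → Set Ordinal.{0},
      (∀ i, i < γ → i ∈ a → f i = S i (restrictPlay f i)) →
      (∀ i, i < γ → i ∉ a → LegalBelow D f i → (∃ A, LegalMove D f i A) →
        LegalMove D f i (f i)) →
      ∃ i, i < γ ∧ LegalBelow D f i ∧ ¬ LegalMove D f i (f i) ∧
        (i ∈ a → ¬ ∃ A, LegalMove D f i A)

/-- Player I has a winning strategy in `Gm⁺(D,γ,a)`. -/
def IWinsGmPlus {lam : Ordinal.{0}} (D : NormalFilterOn lam) (γ : Ordinal.{0}) (a : Set Ordinal.{0}) : Prop :=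
  ∃ S : Ordinal.{0} → (Ordinal.{0} → Set Ordinal.{0}) → Set Ordinal.{0},
    ∀ f : Ordinal.{0} → Set Ordinal.{0},
      (∀ i, i < γ → i ∈ a → f i = S i (restrictPlay f i)) →
      (∀ i, i < γ → i ∉ a → LegalBelow D f i → (∃ A, LegalMove D f i A) →
        LegalMove D f i (f i)) →
      (∃ i, i < γ ∧ LegalBelow D f i ∧ ¬ LegalMove D f i (f i) ∧
        (i ∈ a → ¬ ∃ A, LegalMove D f i A)) ∨
      ¬ ∃ x, ∀ i, i < γ → x ∈ f i

/-- The default set of stages at which player I moves:  `{1 + 2·i}`. -/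
def oddStages : Set Ordinal.{0} := {i | ∃ j : Ordinal.{0}, i = 1 + 2 * j}

/-! ## The games in the generic extension, rendered via names and conditions -/

def defaultPairMove (P : ForcingNotion) : P.Cond × SetName P := (P.one, fun _ => ∅)

def restrictAux (P : ForcingNotion) (g : Ordinal.{0} → P.Cond × SetName P) (i : Ordinal.{0}) :
    Ordinal.{0} → P.Cond × SetName P :=
  fun j => if j < i then g j else defaultPairMove P

/-- Legality of the decorated move `m = (condition, name)` at stage `i` of the
auxiliary play `g` interpreting the game `Gm(D^Q, …)` of `V^Q` below `q`. -/
def AuxLegal {lam : Ordinal.{0}} (P : ForcingNotion) (D : NormalFilterOn lam) (q : P.Cond)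
    (g : Ordinal.{0} → P.Cond × SetName P) (i : Ordinal.{0}) (m : P.Cond × SetName P) : Prop :=
  P.le q m.1 ∧ (∀ j, j < i → P.le (g j).1 m.1) ∧ ForcesPos P D m.1 m.2 ∧
    ∀ j, j < i → ForcesSubsetMod P D m.1 m.2 ((g j).2)

def AuxLegalBelow {lam : Ordinal.{0}} (P : ForcingNotion) (D : NormalFilterOn lam) (q : P.Cond)
    (g : Ordinal.{0} → P.Cond × SetName P) (i : Ordinal.{0}) : Prop :=
  ∀ j, j < i → AuxLegal P D q g j (g j)

/-- `q ⊩ "player II has a winning strategy in Gm(D^Q,γ,a)"`. -/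
def ForcedIIWinsGm {lam : Ordinal.{0}} (P : ForcingNotion) (D : NormalFilterOn lam)
    (γ : Ordinal.{0}) (a : Set Ordinal.{0}) (q : P.Cond) : Prop :=
  ∃ S : Ordinal.{0} → (Ordinal.{0} → P.Cond × SetName P) → P.Cond × SetName P,
    ∀ g : Ordinal.{0} → P.Cond × SetName P,
      (∀ i, i < γ → i ∉ a → g i = S i (restrictAux P g i)) →
      (∀ i, i < γ → i ∈ a → AuxLegalBelow P D q g i → (∃ m, AuxLegal P D q g i m) →
        AuxLegal P D q g i (g i)) →
      ∀ i, i < γ → AuxLegalBelow P D q g i → AuxLegal P D q g i (g i)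

/-- `q ⊩ "player II has a winning strategy in Gm⁺(D^Q,γ,a)"`. -/
def ForcedIIWinsGmPlus {lam : Ordinal.{0}} (P : ForcingNotion) (D : NormalFilterOn lam)
    (γ : Ordinal.{0}) (a : Set Ordinal.{0}) (q : P.Cond) : Prop :=
  ∃ S : Ordinal.{0} → (Ordinal.{0} → P.Cond × SetName P) → P.Cond × SetName P,
    ∀ g : Ordinal.{0} → P.Cond × SetName P,
      (∀ i, i < γ → i ∉ a → g i = S i (restrictAux P g i)) →
      (∀ i, i < γ → i ∈ a → AuxLegalBelow P D q g i → (∃ m, AuxLegal P D q g i m) →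
        AuxLegal P D q g i (g i)) →
      (∀ i, i < γ → AuxLegalBelow P D q g i → AuxLegal P D q g i (g i)) ∧
      ((∀ i, i < γ → AuxLegal P D q g i (g i)) →
        ∃ s, (∀ j, j < γ → P.le (g j).1 s) ∧ ∃ x, ∀ j, j < γ → ForcesMem P s ((g j).2) x)

/-- `q ⊩ "player I has a winning strategy in Gm(D^Q,γ,a)"`. -/
def ForcedIWinsGm {lam : Ordinal.{0}} (P : ForcingNotion) (D : NormalFilterOn lam)
    (γ : Ordinal.{0}) (a : Set Ordinal.{0}) (q : P.Cond) : Prop :=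
  ∃ S : Ordinal.{0} → (Ordinal.{0} → P.Cond × SetName P) → P.Cond × SetName P,
    ∀ g : Ordinal.{0} → P.Cond × SetName P,
      (∀ i, i < γ → i ∈ a → g i = S i (restrictAux P g i)) →
      (∀ i, i < γ → i ∉ a → AuxLegalBelow P D q g i → (∃ m, AuxLegal P D q g i m) →
        AuxLegal P D q g i (g i)) →
      ∃ i, i < γ ∧ AuxLegalBelow P D q g i ∧ ¬ AuxLegal P D q g i (g i) ∧
        (i ∈ a → ¬ ∃ m, AuxLegal P D q g i m)

/-- `q ⊩ "player I has a winning strategy in Gm⁺(D^Q,γ,a)"`. -/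
def ForcedIWinsGmPlus {lam : Ordinal.{0}} (P : ForcingNotion) (D : NormalFilterOn lam)
    (γ : Ordinal.{0}) (a : Set Ordinal.{0}) (q : P.Cond) : Prop :=
  ∃ S : Ordinal.{0} → (Ordinal.{0} → P.Cond × SetName P) → P.Cond × SetName P,
    ∀ g : Ordinal.{0} → P.Cond × SetName P,
      (∀ i, i < γ → i ∈ a → g i = S i (restrictAux P g i)) →
      (∀ i, i < γ → i ∉ a → AuxLegalBelow P D q g i → (∃ m, AuxLegal P D q g i m) →
        AuxLegal P D q g i (g i)) →
      (∃ i, i < γ ∧ AuxLegalBelow P D q g i ∧ ¬ AuxLegal P D q g i (g i) ∧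
        (i ∈ a → ¬ ∃ m, AuxLegal P D q g i m)) ∨
      ¬ ∃ s, (∀ j, j < γ → P.le (g j).1 s) ∧ ∃ x, ∀ j, j < γ → ForcesMem P s ((g j).2) x

/-! ## Systems of conditions indexed by positive sets: the principles
`(*)³`, `(*)⁴`, `(*)⁶`, `(*)⁷` -/

/-- A sequence of conditions `p̄ = ⟨p_i : i ∈ T⟩` (first component: `T`). -/
def PSeq (P : ForcingNotion) : Type 1 := Set Ordinal.{0} × (Ordinal.{0} → P.Cond)

/-- The name `τ_p̄ = {i ∈ T : p_i ∈ G}`. -/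
def tauOf (P : ForcingNotion) (x : PSeq P) : SetName P :=
  fun i => {s | i ∈ x.1 ∧ P.le (x.2 i) s}

/-- `y` extends `x` in `K`:  `T_y ⊆ T_x` and `y` is coordinatewise stronger. -/
def KLe (P : ForcingNotion) (x y : PSeq P) : Prop :=
  y.1 ⊆ x.1 ∧ ∀ i ∈ y.1, P.le (x.2 i) (y.2 i)

/-- The principle `(*)³_{D,K,Q}` of Proposition 1.10. -/
def StarThree {lam : Ordinal.{0}} (P : ForcingNotion) (D : NormalFilterOn lam)
    (K : Set (PSeq P)) (kappa : Ordinal.{0}) : Prop :=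
  (∀ x ∈ K, D.pos x.1) ∧
  (∀ x ∈ K, ¬ ForcesNotPos P D P.one (tauOf P x)) ∧
  (∀ x ∈ K, ∀ T : SetName P, IsSetName P T →
      ¬ ForcesNotPos P D P.one (interName P T (tauOf P x)) →
      ∃ y ∈ K, KLe P x y ∧ ForcesSubset P P.one (tauOf P y) T) ∧
  ((∀ d, d < kappa → ∀ c : Ordinal.{0} → PSeq P, (∀ b, b < d → c b ∈ K) →
      (∀ b b', b ≤ b' → b' < d → KLe P (c b) (c b')) →
      D.pos {i : Ordinal.{0} | i < lam ∧ ∀ b, b < d → i ∈ (c b).1} →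
      ∃ y ∈ K, ∀ b, b < d → KLe P (c b) y) ∨
   (∀ d, d < kappa → ∀ c : Ordinal.{0} → PSeq P, (∀ b, b < d → c b ∈ K) →
      (∀ b b' i, b ≤ b' → b' < d → i ∈ (c b).1 → i ∈ (c b').1 →
        P.le ((c b).2 i) ((c b').2 i)) →
      D.pos {i : Ordinal.{0} | i < lam ∧ ∀ b, b < d → i ∈ (c b).1} →
      ∃ y ∈ K, y.1 ⊆ {i : Ordinal.{0} | i < lam ∧ ∀ b, b < d → i ∈ (c b).1} ∧
        ∀ b, b < d → ∀ i, i ∈ (c b).1 → i ∈ y.1 → P.le ((c b).2 i) (y.2 i))) ∧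
  (∀ (q : P.Cond) (τ : SetName P), IsSetName P τ → ForcesPos P D q τ →
      ∃ x ∈ K, (∀ i ∈ x.1, P.le q (x.2 i)) ∧ ForcesSubset P q (tauOf P x) τ) ∧
  ((Set.Iio lam, fun _ : Ordinal.{0} => P.one) ∈ K)

/-- The principle `(*)⁴_{D,K,Q}`. -/
def StarFour {lam : Ordinal.{0}} (P : ForcingNotion) (D : NormalFilterOn lam)
    (K : Set (PSeq P)) (kappa : Ordinal.{0}) : Prop :=
  StarThree P D K kappa ∧ ∀ x ∈ K, ∀ i ∈ x.1, ForcesPos P D (x.2 i) (tauOf P x)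

/-- The principle `(*)⁶_{D,K,Q}` of Proposition 1.11. -/
def StarSix {lam : Ordinal.{0}} (P : ForcingNotion) (D : NormalFilterOn lam)
    (K : Set (PSeq P)) : Prop :=
  (∀ x ∈ K, D.pos x.1) ∧
  (∀ (q : P.Cond) (T : Set Ordinal.{0}), D.pos T →
      ∃ x ∈ K, (∀ i, P.le q (x.2 i)) ∧ x.1 ⊆ T) ∧
  (∀ x ∈ K, ∀ i ∈ x.1, ForcesPos P D (x.2 i) (tauOf P x)) ∧
  (∀ x ∈ K, ∀ T', T' ⊆ x.1 → D.pos T' → ∀ qf : Ordinal.{0} → P.Cond,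
      (∀ i ∈ T', P.le (x.2 i) (qf i)) →
      ∃ y ∈ K, y.1 ⊆ T' ∧ ∀ i ∈ y.1, P.le (qf i) (y.2 i)) ∧
  (∀ (q : P.Cond) (τ : SetName P), IsSetName P τ → ForcesPos P D q τ →
      ∃ x ∈ K, (∀ i ∈ x.1, P.le q (x.2 i)) ∧ ForcesSubset P q (tauOf P x) τ) ∧
  ((Set.Iio lam, fun _ : Ordinal.{0} => P.one) ∈ K)

def Incompatible (P : ForcingNotion) (p q : P.Cond) : Prop := ¬ ∃ r, P.le p r ∧ P.le q r

/-- `P` satisfies the `lam`-c.c. -/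
def LamCC (P : ForcingNotion) (lam : Ordinal.{0}) : Prop :=
  ∀ A : Set P.Cond, (∀ p ∈ A, ∀ q ∈ A, p ≠ q → Incompatible P p q) → SizeLT A lam

/-- The principle `(*)⁷_{D,K,D₁,Q}` of Proposition 1.12. -/
def StarSeven {lam : Ordinal.{0}} (P : ForcingNotion) (D D1 : NormalFilterOn lam)
    (K : Set (PSeq P)) (kappa : Ordinal.{0}) : Prop :=
  (StarSix P D K ∨ StarThree P D K kappa) ∧
  ((∀ x ∈ K, D1.pos {d : Ordinal.{0} | d < lam ∧ ForcesStatIn P P.one (tauOf P x) d}) ∨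
   ((∀ x ∈ K, D1.pos {d : Ordinal.{0} | d < lam ∧ ¬ ForcesNonstatIn P P.one (tauOf P x) d}) ∧
     LamCC P lam))

/-- The principle `C_{D,D₁}` of Proposition 1.12. -/
def CDPrinciple {lam : Ordinal.{0}} (D D1 : NormalFilterOn lam) : Prop :=
  ∀ T, D.pos T → D1.pos {d : Ordinal.{0} | d < lam ∧ StatIn T d}

/-! ## The Levy collapse `Col(μ,<λ)` -/

structure IsLevyCond (mu lam : Ordinal.{0}) (f : Set (Ordinal.{0} × Ordinal.{0} × Ordinal.{0})) : Prop where
  func : ∀ a x b b', (a, x, b) ∈ f → (a, x, b') ∈ f → b = b'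
  dom_lt : ∀ a x b, (a, x, b) ∈ f → a < lam ∧ x < mu
  val_lt : ∀ a x b, (a, x, b) ∈ f → b < a
  small : f = ∅ ∨ SizeLT f mu

/-- The Levy collapse `Col(mu, <lam)`:  partial functions of size `< mu` on
`lam × mu` with `p(a,x) < a`, ordered by extension. -/
def LevyCollapse (mu lam : Ordinal.{0}) : ForcingNotion where
  Cond := {f : Set (Ordinal.{0} × Ordinal.{0} × Ordinal.{0}) // IsLevyCond mu lam f}
  le f g := f.1 ⊆ g.1
  le_refl _ := subset_rfl
  le_trans h1 h2 := h1.trans h2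
  one := ⟨∅, { func := fun _ _ _ _ h => absurd h (Set.notMem_empty _),
               dom_lt := fun _ _ _ h => absurd h (Set.notMem_empty _),
               val_lt := fun _ _ _ h => absurd h (Set.notMem_empty _),
               small := Or.inl rfl }⟩
  one_le _ := Set.empty_subset _

/-! ## Forcing with the positive sets of an ideal;  precipitousness
(well-foundedness of generic ultrapowers) and closure of generic ultrapowers -/

/-- Forcing with the `Pos`-positive subsets of `T`, ordered by inclusion. -/
def PosForcing (Pos : Set (Set Ordinal.{0})) (T : Set Ordinal.{0}) : ForcingNotion where
  Cond := {A : Set Ordinal.{0} // A = T ∨ (A ∈ Pos ∧ A ⊆ T)}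
  le A B := B.1 ⊆ A.1
  le_refl _ := subset_rfl
  le_trans h1 h2 := h2.trans h1
  one := ⟨T, Or.inl rfl⟩
  one_le p := by
    rcases p.2 with h | h
    · exact h.subset
    · exact h.2

/-- A name for an element of the generic ultrapower: a name of a ground-model
function (on ordinals). -/
def FnName (P : ForcingNotion) : Type 1 := (Ordinal.{0} → Ordinal.{0}) → Set P.Cond

def IsFnNameAbove (P : ForcingNotion) (q : P.Cond) (N : FnName P) : Prop :=
  (∀ g p r, p ∈ N g → P.le p r → r ∈ N g) ∧
  (∀ r, P.le q r → ∃ s, P.le r s ∧ ∃ g, s ∈ N g) ∧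
  (∀ g g' s, s ∈ N g → s ∈ N g' → g = g')

/-- The ideal with positive sets `Pos` (on the underlying set `T`) is
precipitous: no condition forces an infinite descending sequence in the
generic ultrapower. -/
def IdealPrecipitous (Pos : Set (Set Ordinal.{0})) (T : Set Ordinal.{0}) : Prop :=
  ¬ ∃ (q : (PosForcing Pos T).Cond) (N : ℕ → FnName (PosForcing Pos T)),
      (∀ n, IsFnNameAbove (PosForcing Pos T) q (N n)) ∧
      ∀ n, ∀ r, (PosForcing Pos T).le q r → ∃ s, (PosForcing Pos T).le r s ∧
        ∃ g g' : Ordinal.{0} → Ordinal.{0}, s ∈ N n g ∧ s ∈ N (n + 1) g' ∧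
          (s.1 ∩ {a : Ordinal.{0} | ¬ g' a < g a}) ∉ Pos

/-- The (well-founded) generic ultrapower is closed under sequences of length
`< kappa` of its elements in the generic extension. -/
def IdealUltraClosed (Pos : Set (Set Ordinal.{0})) (T : Set Ordinal.{0}) (kappa : Ordinal.{0}) : Prop :=
  ∀ (q : (PosForcing Pos T).Cond) (d : Ordinal.{0}), d < kappa →
    ∀ N : Ordinal.{0} → FnName (PosForcing Pos T),
      (∀ x, x < d → IsFnNameAbove (PosForcing Pos T) q (N x)) →
      ∀ r, (PosForcing Pos T).le q r → ∃ s, (PosForcing Pos T).le r s ∧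
        ∃ F : Ordinal.{0} → Ordinal.{0} → Ordinal.{0},
          ∀ x, x < d → ∀ t, (PosForcing Pos T).le s t →
            ∃ u, (PosForcing Pos T).le t u ∧ ∃ g, u ∈ N x g ∧
              (u.1 ∩ {a : Ordinal.{0} | F a x ≠ g a}) ∉ Pos

/-- Forcing with the positive sets preserves the cardinal `nu`. -/
def IdealPreservesCardinal (Pos : Set (Set Ordinal.{0})) (T : Set Ordinal.{0}) (nu : Ordinal.{0}) : Prop :=
  PreservesCardinalForced (PosForcing Pos T) nu

/-- The ideal is `nu`-preserving: precipitous, and forcing with the positive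
sets preserves the cardinal `nu` (Definition 1.4). -/
def IdealKappaPreserving (Pos : Set (Set Ordinal.{0})) (T : Set Ordinal.{0}) (nu : Ordinal.{0}) : Prop :=
  IdealPrecipitous Pos T ∧ IdealPreservesCardinal Pos T nu

/-! ## The nonstationary ideal and its cofinality restrictions -/

/-- The `NS_lam`-positive sets: the stationary subsets of `lam`. -/
def NSPos (lam : Ordinal.{0}) : Set (Set Ordinal.{0}) := {A | A ⊆ Set.Iio lam ∧ StatIn A lam}

def cofSet (lam : Ordinal.{0}) (m : Cardinal) : Set Ordinal.{0} := {x | x < lam ∧ x.cof = m}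

/-- The `NS_lam^m`-positive sets: stationary sets concentrating on cofinality `m`. -/
def NSPosCof (lam : Ordinal.{0}) (m : Cardinal) : Set (Set Ordinal.{0}) :=
  {A | A ⊆ cofSet lam m ∧ StatIn A lam}

/-! ## Repeat points and (abstract) core-model data -/

/-- `δ` is an up-repeat point for the sequence `⟨F β : β < γ⟩` (Definition 2.0(a)). -/
def IsUpRepeatPoint (F : Ordinal.{0} → Set (Set Ordinal.{0})) (γ δ : Ordinal.{0}) : Prop :=
  δ < γ ∧ ∀ A ∈ F δ, ∃ δ', δ < δ' ∧ δ' < γ ∧ A ∈ F δ'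

/-- `δ` is a `(lam, ρ)`-repeat point for `⟨F β : β < γ⟩` (Definition 2.0(b)). -/
def IsRepeatPoint (F : Ordinal.{0} → Set (Set Ordinal.{0})) (γ : Ordinal.{0}) (lam : Cardinal)
    (ρ δ : Ordinal.{0}) : Prop :=
  δ < γ ∧ δ.cof = lam ∧ ∀ A : Set Ordinal.{0},
    (∀ b, δ ≤ b → b < δ + ρ → A ∈ F b) →
    ∀ c, c < δ → ∃ ξ, c ≤ ξ ∧ ξ < δ ∧ ∀ ξ', ξ ≤ ξ' → ξ' < ξ + ρ → A ∈ F ξ'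

/-- `U` is a normal ultrafilter over `a`. -/
def IsNormalUltrafilterOn (a : Ordinal.{0}) (U : Set (Set Ordinal.{0})) : Prop :=
  (∃ D : NormalFilterOn a, D.sets = U) ∧
  ∀ X, X ⊆ Set.Iio a → X ∈ U ∨ (Set.Iio a \ X) ∈ U

/-- Abstract data for (the maximal sequence of measures `F⃗` of) the core model
`K(F⃗)`: the Mitchell order `o`, the measure sequence `seq`, and the predicate
"regular in `K(F⃗)`". -/
structure CoreModelData where
  o : Ordinal.{0} → Ordinal.{0}
  seq : Ordinal.{0} → Ordinal.{0} → Set (Set Ordinal.{0})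
  regularIn : Ordinal.{0} → Prop

/-! Presaturation shrinks `B` to a positive `A*` meeting at most `λ` members of each antichain
`I_a` positively; code those members injectively by `g_a` into `λ`. By maximality, almost every
`x ∈ A*` lies, for each `a`, in a member `A_{i_a(x)}^a` with `g_a(i_a(x)) < x` (the antichain is
almost contained in its diagonal union). At points of cofinality `≥ κ` these fewer than `κ`
codes are bounded below `x`, so Fodor's lemma fixes a common bound `ξ` on a positive set; there
are only `|ξ|^κ < λ` tuples of codes below `ξ`, so `λ`-completeness fixes the whole tuple on a
positive set `A**`, which is then contained in a single member of each antichain. -/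

namespace NormalFilterOn

variable {lam : Ordinal.{0}} (D : NormalFilterOn lam) {S T : Set Ordinal.{0}}

theorem Iio_mem (h0 : 0 < lam) : Iio lam ∈ D.sets := by
  simpa [Iio_def] using D.tail_mem 0 h0

variable {D}

theorem pos.nonempty (h0 : 0 < lam) (hS : D.pos S) : S.Nonempty := by
  by_contra hempty
  rw [not_nonempty_iff_eq_empty] at hempty
  exact hS.2 (by simpa [hempty] using D.Iio_mem h0)

theorem diff_mem_of_not_pos (hS : S ⊆ Iio lam) (h : ¬ D.pos S) : Iio lam \ S ∈ D.sets := by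
  by_contra h'
  exact h ⟨hS, h'⟩

theorem pos.inter_mem (hS : D.pos S) (hT : T ∈ D.sets) : D.pos (S ∩ T) := by
  refine ⟨fun x hx => hS.1 hx.1, fun h => hS.2 ?_⟩
  refine D.superset_mem _ (D.inter_mem _ h _ hT) _ sdiff_subset ?_
  rintro x ⟨⟨hx, hxST⟩, hxT⟩
  exact ⟨hx, fun hxS => hxST ⟨hxS, hxT⟩⟩

theorem pos.mono (hS : D.pos S) (hST : S ⊆ T) (hT : T ⊆ Iio lam) : D.pos T :=
  ⟨hT, fun h => hS.2 (D.superset_mem _ h _ sdiff_subset (sdiff_subset_sdiff_right hST))⟩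

theorem Ioo_mem (hlim : Order.IsSuccLimit lam) {a : Ordinal.{0}} (ha : a < lam) :
    {x | a < x ∧ x < lam} ∈ D.sets := by
  simpa [Order.succ_le_iff] using D.tail_mem (Order.succ a) (hlim.succ_lt ha)

theorem exists_pos_fiber_of_regressive (h0 : 0 < lam) (hS : D.pos S)
    (f : Ordinal.{0} → Ordinal.{0}) (hf : ∀ x ∈ S, f x < x) :
    ∃ ζ, D.pos {x | x ∈ S ∧ f x = ζ} := by
  by_contra! h
  have hΔ := D.diagonal _ fun ζ _ => diff_mem_of_not_pos (fun x hx => hS.1 hx.1) (h ζ)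
  obtain ⟨x, hxS, -, hxΔ⟩ := (hS.inter_mem hΔ).nonempty h0
  exact (hxΔ (f x) (hf x hxS)).2 ⟨hxS, rfl⟩

theorem exists_pos_fiber_of_lt (h0 : 0 < lam) (hS : D.pos S) {b : Ordinal.{0}} (hb : b < lam)
    (f : Ordinal.{0} → Ordinal.{0}) (hf : ∀ x ∈ S, f x < b) :
    ∃ ζ, D.pos {x | x ∈ S ∧ f x = ζ} := by
  by_contra! h
  have hC := D.complete b hb _ fun ζ _ => diff_mem_of_not_pos (fun x hx => hS.1 hx.1) (h ζ)
  obtain ⟨x, hxS, -, hxC⟩ := (hS.inter_mem hC).nonempty h0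
  exact (hxC (f x) (hf x hxS)).2 ⟨hxS, rfl⟩

theorem exists_pos_fiber_of_mk_image_lt (h0 : 0 < lam) (hS : D.pos S) {β : Type*}
    (H : Ordinal.{0} → β) (hH : #(H '' S) < Cardinal.lift lam.card) :
    ∃ t, D.pos {x | x ∈ S ∧ H x = t} := by
  classical
  obtain ⟨c, hc, hcH⟩ := Cardinal.lt_lift_iff.mp hH
  have hb : c.ord < lam := (Cardinal.ord_lt_ord.mpr (Order.lt_succ_of_not_isMax
    (not_isMax c))).trans_le (Cardinal.ord_le.mpr (Order.succ_le_of_lt hc))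
  obtain ⟨e⟩ : Nonempty (H '' S ↪ Iio c.ord) := Cardinal.lift_mk_le'.mp (by simp [← hcH])
  let code : Ordinal.{0} → Ordinal.{0} := fun x =>
    if hx : x ∈ S then (e ⟨H x, mem_image_of_mem H hx⟩ : Ordinal.{0}) else 0
  obtain ⟨ζ, hζ⟩ := exists_pos_fiber_of_lt h0 hS hb code fun x hx => by
    simpa only [code, dif_pos hx, mem_Iio] using (e ⟨H x, mem_image_of_mem H hx⟩).2
  obtain ⟨x₀, hx₀S, hx₀ζ⟩ := hζ.nonempty h0
  refine ⟨H x₀, hζ.mono ?_ fun x hx => hS.1 hx.1⟩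
  rintro x ⟨hxS, hxζ⟩
  have hcode : e ⟨H x, mem_image_of_mem H hxS⟩ = e ⟨H x₀, mem_image_of_mem H hx₀S⟩ :=
    Subtype.ext (by simpa [code, hxS, hx₀S] using hxζ.trans hx₀ζ.symm)
  exact ⟨hxS, congrArg Subtype.val (e.injective hcode)⟩


theorem exists_pos_forall_le_of_regressive (h0 : 0 < lam) (hS : D.pos S) {k0 : Ordinal.{0}}
    (hcof : ∀ x ∈ S, k0.card < x.cof) (f : Ordinal.{0} → Ordinal.{0} → Ordinal.{0})
    (hf : ∀ x ∈ S, ∀ a < k0, f a x < x) :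
    ∃ ξ < lam, D.pos {x | x ∈ S ∧ ∀ a < k0, f a x ≤ ξ} := by
  let sup : Ordinal.{0} → Ordinal.{0} := fun x => ⨆ a : Iio k0, f a x
  have hsup : ∀ x ∈ S, sup x < x := fun x hx =>
    Ordinal.lift_iSup_lt_of_lt_cof
      (by simpa [← Ordinal.lift_cof, ← Ordinal.lift_card] using hcof x hx) fun a => hf x hx a a.2
  obtain ⟨ξ, hξ⟩ := exists_pos_fiber_of_regressive h0 hS sup hsup
  obtain ⟨x₀, hx₀S, rfl⟩ := hξ.nonempty h0
  refine ⟨sup x₀, (hsup x₀ hx₀S).trans (hS.1 hx₀S), hξ.mono ?_ fun x hx => hS.1 hx.1⟩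
  rintro x ⟨hxS, hx⟩
  exact ⟨hxS, fun a ha => hx ▸ Ordinal.le_iSup (fun a : Iio k0 => f a x) ⟨a, ha⟩⟩

end NormalFilterOn

namespace IsMaxAntichainPos

variable {lam : Ordinal.{0}} {D : NormalFilterOn lam} {i0 : Ordinal.{0}}
  {A : Ordinal.{0} → Set Ordinal.{0}}

theorem existsUnique_pos_inter (hA : IsMaxAntichainPos D i0 A) {S : Set Ordinal.{0}}
    (hS : D.pos S) {i : Ordinal.{0}} (hi : i < i0) (hSA : S ⊆ A i) :
    ∃! j, j < i0 ∧ D.pos (S ∩ A j) := by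
  refine ⟨i, ⟨hi, by rwa [inter_eq_left.mpr hSA]⟩, fun j ⟨hj, hSj⟩ => ?_⟩
  by_contra hji
  exact hA.2.1 i hi j hj (Ne.symm hji)
    (hSj.mono (inter_subset_inter_left _ hSA) fun x hx => (hA.1 i hi).1 hx.1)

theorem ae_mem_diagonal_union (hA : IsMaxAntichainPos D i0 A) (hlim : Order.IsSuccLimit lam)
    {T : Set Ordinal.{0}} (hT : T ⊆ Iio lam) (g : Ordinal.{0} → Ordinal.{0})
    (hg : ∀ i ∈ {i | i < i0 ∧ D.pos (T ∩ A i)}, g i < lam) :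
    {x | x < lam ∧ (x ∈ T → ∃ i, (i < i0 ∧ D.pos (T ∩ A i)) ∧ g i < x ∧ x ∈ A i)} ∈ D.sets := by
  set N := {x | x ∈ T ∧ ¬ ∃ i, (i < i0 ∧ D.pos (T ∩ A i)) ∧ g i < x ∧ x ∈ A i}
  have hN : ¬ D.pos N := by
    intro hNpos
    obtain ⟨i, hi, hNi⟩ := hA.2.2 N hNpos
    have hTi : D.pos (T ∩ A i) := hNi.mono (inter_subset_inter_left _ fun x hx => hx.1)
      fun x hx => hT hx.1
    obtain ⟨x, ⟨⟨-, hxN⟩, hxA⟩, hgx, -⟩ :=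
      (hNi.inter_mem (D.Ioo_mem hlim (hg i ⟨hi, hTi⟩))).nonempty hlim.bot_lt
    exact hxN ⟨i, ⟨hi, hTi⟩, hgx, hxA⟩
  convert NormalFilterOn.diff_mem_of_not_pos (fun x hx => hT hx.1) hN using 1
  ext x
  simp [N, imp_iff_not_or]

end IsMaxAntichainPos

theorem Cardinal.mk_setOf_forall_le (k0 ξ : Ordinal.{0}) :
    #{t : Iio k0 → Ordinal.{0} | ∀ a, t a ≤ ξ} =
      Cardinal.lift ((Order.succ ξ).card ^ k0.card) := by
  have hIic : #(Iic ξ) = Cardinal.lift (Order.succ ξ).card := by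
    rw [← Cardinal.mk_Iio_ordinal, Order.Iio_succ]
  show #{t : Iio k0 → Ordinal.{0} // ∀ a, t a ∈ Iic ξ} = _
  rw [Cardinal.mk_congr (Equiv.subtypePiEquivPi (β := fun _ : Iio k0 => Ordinal.{0})
    (p := fun _ b => b ∈ Iic ξ)), Cardinal.mk_arrow, hIic, Cardinal.mk_Iio_ordinal]
  simp

theorem Cardinal.mk_setOf_forall_le_lt {kappa lam : Cardinal.{0}}
    (hpow : ∀ θ < lam, θ ^ kappa < lam) (hlim : Order.IsSuccLimit lam.ord) {k0 ξ : Ordinal.{0}}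
    (hk0 : k0 < kappa.ord) (hξ : ξ < lam.ord) :
    #{t : Iio k0 → Ordinal.{0} | ∀ a, t a ≤ ξ} < Cardinal.lift lam.ord.card := by
  rw [mk_setOf_forall_le, card_ord, lift_lt]
  calc (Order.succ ξ).card ^ k0.card ≤ (Order.succ ξ).card ^ kappa :=
        power_le_power_left (by simp) (lt_ord.mp hk0).le
    _ < lam := hpow _ (lt_ord.mp (hlim.succ_lt hξ))

theorem fact_1_3_general (kappa lam : Cardinal) (hlreg : lam.IsRegular)
    (hkl : kappa < lam) (hpow : ∀ θ : Cardinal, θ < lam → θ ^ kappa < lam)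
    (D : NormalFilterOn lam.ord)
    (hcof : {i : Ordinal.{0} | i < lam.ord ∧ kappa ≤ i.cof} ∈ D.sets)
    (hpresat : Presaturated D kappa.ord)
    (k0 : Ordinal.{0}) (hk0 : k0 < kappa.ord)
    (idx : Ordinal.{0} → Ordinal.{0}) (A : Ordinal.{0} → Ordinal.{0} → Set Ordinal.{0})
    (hA : ∀ a, a < k0 → IsMaxAntichainPos D (idx a) (A a))
    (B : Set Ordinal.{0}) (hB : D.pos B) :
    ∃ Astar : Set Ordinal.{0}, D.pos Astar ∧ Astar ⊆ B ∧
      ∀ a, a < k0 → ∃! i : Ordinal.{0}, i < idx a ∧ D.pos (Astar ∩ A a i) := by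
  have hlim : Order.IsSuccLimit lam.ord := Cardinal.isSuccLimit_ord hlreg.aleph0_le
  have h0 : 0 < lam.ord := hlim.bot_lt
  obtain ⟨Astar, hpos, hAB, hsize⟩ := hpresat k0 hk0 idx A hA B hB
  choose! g hg_lt hg_inj using hsize
  have hae := D.complete k0 (hk0.trans (Cardinal.ord_lt_ord.mpr hkl)) _
    fun a ha => (hA a ha).ae_mem_diagonal_union hlim hpos.1 (g a) (hg_lt a ha)
  obtain ⟨S, hS, hSA, hSx⟩ : ∃ S, D.pos S ∧ S ⊆ Astar ∧ ∀ x ∈ S, kappa ≤ x.cof ∧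
      ∀ a < k0, ∃ i, (i < idx a ∧ D.pos (Astar ∩ A a i)) ∧ g a i < x ∧ x ∈ A a i :=
    ⟨_, (hpos.inter_mem hae).inter_mem hcof, fun x hx => hx.1.1,
      fun x hx => ⟨hx.2.2, fun a ha => (hx.1.2.2 a ha).2 hx.1.1⟩⟩
  choose! i hi using fun x hx => (hSx x hx).2
  obtain ⟨ξ, hξ, hS₁⟩ := NormalFilterOn.exists_pos_forall_le_of_regressive h0 hS
    (fun x hx => (Cardinal.lt_ord.mp hk0).trans_le (hSx x hx).1) (fun a x => g a (i x a))
    fun x hx a ha => (hi x hx a ha).2.1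
  obtain ⟨t, hS₂⟩ := NormalFilterOn.exists_pos_fiber_of_mk_image_lt h0 hS₁
    (fun x (a : Iio k0) => g a (i x a)) <|
      (Cardinal.mk_le_mk_of_subset (by rintro _ ⟨x, hx, rfl⟩ a; exact hx.2 a a.2)).trans_lt
        (Cardinal.mk_setOf_forall_le_lt hpow hlim hk0 hξ)
  refine ⟨_, hS₂, fun x hx => hAB (hSA hx.1.1), fun a ha => ?_⟩
  obtain ⟨x₀, hx₀⟩ := hS₂.nonempty h0
  refine (hA a ha).existsUnique_pos_inter hS₂ (hi x₀ hx₀.1.1 a ha).1.1 fun x hx => ?_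
  have hix : i x a = i x₀ a := hg_inj a ha _ (hi x hx.1.1 a ha).1 _ (hi x₀ hx₀.1.1 a ha).1
    (congrFun (hx.2.trans hx₀.2.symm) ⟨a, ha⟩)
  exact hix ▸ (hi x hx.1.1 a ha).2.2

/-- Let `κ < λ` be regular cardinals with `θ^κ < λ` for every `θ < λ`, and let
`D` be a normal filter on `λ` that is `κ`-presaturated and satisfies
`{i < λ : cf i ≥ κ} ∈ D`.  Then for every `κ₀ < κ`, every family of maximal
antichains `I_a = {A_i^a : i < i_a}` of `D⁺` (`a < κ₀`), and every `B ∈ D⁺`,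
there is `A** ∈ D⁺`, `A** ⊆ B`, such that for every `a < κ₀` there is exactly
one `i < i_a` with `A** ∩ A_i^a ∈ D⁺`. -/
theorem fact_1_3 (kappa lam : Cardinal) (hkreg : kappa.IsRegular) (hlreg : lam.IsRegular)
    (hkl : kappa < lam) (hpow : ∀ θ : Cardinal, θ < lam → θ ^ kappa < lam)
    (D : NormalFilterOn lam.ord)
    (hcof : {i : Ordinal.{0} | i < lam.ord ∧ kappa ≤ i.cof} ∈ D.sets)
    (hpresat : Presaturated D kappa.ord)
    (k0 : Ordinal.{0}) (hk0 : k0 < kappa.ord)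
    (idx : Ordinal.{0} → Ordinal.{0}) (A : Ordinal.{0} → Ordinal.{0} → Set Ordinal.{0})
    (hA : ∀ a, a < k0 → IsMaxAntichainPos D (idx a) (A a))
    (B : Set Ordinal.{0}) (hB : D.pos B) :
    ∃ Astar : Set Ordinal.{0}, D.pos Astar ∧ Astar ⊆ B ∧
      ∀ a, a < k0 → ∃! i : Ordinal.{0}, i < idx a ∧ D.pos (Astar ∩ A a i) :=
  fact_1_3_general kappa lam hlreg hkl hpow D hcof hpresat k0 hk0 idx A hA B hB
end
end

section
/- Let D and D₁ be normal filters over a regular cardinal λ, and suppose the principle C_{D,D₁} holds: for every T ∈ D⁺, the set F(T) = {δ < λ : T ∩ δ is stationary in δ} belongs to D₁⁺. Let Q be a κ-closed forcing notion for a regular κ < λ. Then in V^Q, C_{D,D₁} is not forced to fail (i.e. no condition forces the existence of S ∈ (D^Q)⁺ with F(S) ∉ (D₁^Q)⁺), provided that the principle (*)⁷_{D,K,D₁,Q} holds: (α) (*)⁶_{D,K,Q} or (*)³_{D,K,Q} holds, and either (β₁) for every p̄ ∈ K the set {δ < λ : τ_p̄ ∩ δ is forced to be stationary} belongs to D₁⁺,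 or (β₂) for every p̄ ∈ K the set {δ < λ : τ_p̄ ∩ δ is not forced to be nonstationary} belongs to D₁⁺ and Q satisfies the λ-c.c. -/
open Set Cardinal

noncomputable section

/-! ### Statement 7 (Proposition 1.12) -/

/-- `q` forces `F(S) = {δ < λ : S ∩ δ is stationary in δ}` to be outside
`(D₁^Q)⁺`, i.e. forces that some `C ∈ D₁` is disjoint from `F(S)`. -/
def ForcesFNotPos {lam : Ordinal.{0}} (P : ForcingNotion) (D1 : NormalFilterOn lam)
    (q : P.Cond) (S : SetName P) : Prop :=
  ∀ r, P.le q r → ∃ s, P.le r s ∧ ∃ C ∈ D1.sets, ∀ d ∈ C, ForcesNonstatIn P s S d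

/-! Cover the forced-positive `S` by some `τ_p̄ ⊆ S` with `p̄ ∈ K` lying above the condition `s`
that forces `S ∩ δ` nonstationary for all `δ` in some `C ∈ D₁`. Then `τ_p̄ ∩ δ` is forced
nonstationary for `δ ∈ C`, while by `(β₁)` or `(β₂)` some `δ ∈ C` has `τ_p̄ ∩ δ` (possibly)
stationary. Under `(β₂)` the clash needs one more observation: every condition incompatible
with `s` forces `τ_p̄ = ∅`, so `τ_p̄ ∩ δ` is in fact forced nonstationary by every condition. -/

theorem NormalFilterOn.exists_mem_of_pos {lam : Ordinal.{0}} (D : NormalFilterOn lam)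
    {X C : Set Ordinal.{0}} (hX : D.pos X) (hC : C ∈ D.sets) : ∃ d ∈ C, d ∈ X := by
  by_contra! h
  exact hX.2 <| D.superset_mem C hC _ sdiff_subset fun d hd => ⟨D.subset_field C hC hd, h d hd⟩

section Forcing

variable {P : ForcingNotion}

theorem ForcesPos.mono {lam : Ordinal.{0}} {D : NormalFilterOn lam} {q r : P.Cond}
    {σ : SetName P} (h : ForcesPos P D q σ) (hqr : P.le q r) : ForcesPos P D r σ :=
  fun C hC t hrt => h C hC t (P.le_trans hqr hrt)

theorem ForcesClubIn.exists_between {q : P.Cond} {C : SetName P} {d : Ordinal.{0}}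
    (h : ForcesClubIn P q C d) {b : Ordinal.{0}} (hb : b < d) : ∃ i, b < i ∧ i < d := by
  obtain ⟨-, -, i, hbi, hid, -⟩ := h.1 b hb q (P.le_refl q)
  exact ⟨i, hbi, hid⟩

theorem forcesClubIn_groundName_Iio (q : P.Cond) {d : Ordinal.{0}}
    (hd : ∀ b < d, ∃ i, b < i ∧ i < d) : ForcesClubIn P q (groundName P (Iio d)) d := by
  have hmem : ∀ t i, i < d → ForcesMem P t (groundName P (Iio d)) i :=
    fun _ _ hi u _ => ⟨u, P.le_refl u, hi⟩
  refine ⟨fun b hb r _ => ?_, fun x hx _ s _ _ => hmem s x hx⟩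
  obtain ⟨i, hbi, hid⟩ := hd b hb
  exact ⟨r, P.le_refl r, i, hbi, hid, hmem r i hid⟩

theorem ForcesNonstatIn.mono {q r : P.Cond} {σ : SetName P} {d : Ordinal.{0}}
    (h : ForcesNonstatIn P q σ d) (hqr : P.le q r) : ForcesNonstatIn P r σ d :=
  fun t hrt => h t (P.le_trans hqr hrt)

theorem ForcesNonstatIn.of_forcesSubset {q : P.Cond} {σ τ : SetName P} {d : Ordinal.{0}}
    (h : ForcesNonstatIn P q σ d) (hτσ : ForcesSubset P q τ σ) : ForcesNonstatIn P q τ d := by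
  intro r hqr
  obtain ⟨s, hrs, C, hC, hdisj⟩ := h r hqr
  refine ⟨s, hrs, C, hC, fun i hi t hst ⟨hτ, hCi⟩ => hdisj i hi t hst ⟨?_, hCi⟩⟩
  exact hτσ i t (P.le_trans hqr (P.le_trans hrs hst)) hτ

theorem forcesNonstatIn_of_dense {q : P.Cond} {σ : SetName P} {d : Ordinal.{0}}
    (h : ∀ r, P.le q r → ∃ t, P.le r t ∧ ForcesNonstatIn P t σ d) :
    ForcesNonstatIn P q σ d := by
  intro r hqr
  obtain ⟨t, hrt, ht⟩ := h r hqr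
  obtain ⟨s, hts, hs⟩ := ht t (P.le_refl t)
  exact ⟨s, P.le_trans hrt hts, hs⟩

theorem forcesNonstatIn_of_forcesNotMem {q : P.Cond} {σ : SetName P} {d : Ordinal.{0}}
    (hd : ∀ b < d, ∃ i, b < i ∧ i < d) (h : ∀ i < d, ForcesNotMem P q σ i) :
    ForcesNonstatIn P q σ d := by
  intro r hqr
  refine ⟨r, P.le_refl r, _, forcesClubIn_groundName_Iio r hd, fun i hi t hrt ⟨hσ, _⟩ => ?_⟩
  obtain ⟨u, htu, hu⟩ := hσ t (P.le_refl t)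
  exact h i hi u (P.le_trans hqr (P.le_trans hrt htu)) hu

theorem ForcesStatIn.not_forcesNonstatIn {q r : P.Cond} {σ : SetName P} {d : Ordinal.{0}}
    (h : ForcesStatIn P q σ d) (hqr : P.le q r) : ¬ ForcesNonstatIn P r σ d := by
  intro hns
  obtain ⟨s, hrs, C, hC, hdisj⟩ := hns r (P.le_refl r)
  obtain ⟨t, hst, i, hi, hmem⟩ := h s (P.le_trans hqr hrs) C hC
  exact hdisj i hi t hst hmem

theorem forcesNotMem_tauOf_of_incompatible {x : PSeq P} {r s : P.Cond}
    (hx : ∀ i ∈ x.1, P.le s (x.2 i)) (hrs : Incompatible P r s) (i : Ordinal.{0}) :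
    ForcesNotMem P r (tauOf P x) i :=
  fun t hrt ⟨hi, hxt⟩ => hrs ⟨t, hrt, P.le_trans (hx i hi) hxt⟩

theorem ForcesNonstatIn.tauOf_of_forall_le {x : PSeq P} {s : P.Cond} {d : Ordinal.{0}}
    (hx : ∀ i ∈ x.1, P.le s (x.2 i)) (h : ForcesNonstatIn P s (tauOf P x) d) (q : P.Cond) :
    ForcesNonstatIn P q (tauOf P x) d := by
  have hd : ∀ b < d, ∃ i, b < i ∧ i < d := by
    obtain ⟨_, -, C, hC, -⟩ := h s (P.le_refl s)
    exact fun b hb => hC.exists_between hb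
  refine forcesNonstatIn_of_dense fun r _ => ?_
  by_cases hrs : Incompatible P r s
  · exact ⟨r, P.le_refl r,
      forcesNonstatIn_of_forcesNotMem hd fun i _ => forcesNotMem_tauOf_of_incompatible hx hrs i⟩
  · obtain ⟨t, hrt, hst⟩ := not_not.mp hrs
    exact ⟨t, hrt, h.mono hst⟩

end Forcing

theorem prop_1_12_general (kappa lam : Cardinal)
    (D D1 : NormalFilterOn lam.ord)
    (P : ForcingNotion)
    (K : Set (PSeq P)) (hstar7 : StarSeven P D D1 K kappa.ord) :
    ¬ ∃ (q : P.Cond) (S : SetName P), IsSetName P S ∧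
        ForcesPos P D q S ∧ ForcesFNotPos P D1 q S := by
  rintro ⟨q, S, hS, hpos, hFnot⟩
  obtain ⟨s, hqs, C, hC, hns⟩ := hFnot q (P.le_refl q)
  obtain ⟨hcover, hbeta⟩ := hstar7
  obtain ⟨x, hxK, hxs, hxS⟩ : ∃ x ∈ K, (∀ i ∈ x.1, P.le s (x.2 i)) ∧
      ForcesSubset P s (tauOf P x) S :=
    hcover.elim (fun h => h.2.2.2.2.1 s S hS (hpos.mono hqs))
      (fun h => h.2.2.2.2.1 s S hS (hpos.mono hqs))
  have hτ : ∀ d ∈ C, ForcesNonstatIn P s (tauOf P x) d :=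
    fun d hd => (hns d hd).of_forcesSubset hxS
  rcases hbeta with hstat | ⟨hmaybe, -⟩
  · obtain ⟨d, hdC, -, hd⟩ := D1.exists_mem_of_pos (hstat x hxK) hC
    exact hd.not_forcesNonstatIn (P.one_le s) (hτ d hdC)
  · obtain ⟨d, hdC, -, hd⟩ := D1.exists_mem_of_pos (hmaybe x hxK) hC
    exact hd ((hτ d hdC).tauOf_of_forall_le hxs P.one)

/-- Proposition 1.12:  Let `D, D₁` be normal filters over a regular `λ` with
`C_{D,D₁}`:  `F(T) = {δ < λ : T ∩ δ stationary} ∈ D₁⁺` for every `T ∈ D⁺`.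
Let `Q` be `κ`-closed for a regular `κ < λ`.  Then in `V^Q` the principle
`C_{D,D₁}` is not forced to fail, provided `(*)⁷_{D,K,D₁,Q}` holds. -/
theorem prop_1_12 (kappa lam : Cardinal) (hkreg : kappa.IsRegular) (hlreg : lam.IsRegular)
    (hkl : kappa < lam)
    (D D1 : NormalFilterOn lam.ord)
    (hCD : CDPrinciple D D1)
    (P : ForcingNotion) (hclosed : KappaClosed P kappa.ord)
    (K : Set (PSeq P)) (hstar7 : StarSeven P D D1 K kappa.ord) :
    ¬ ∃ (q : P.Cond) (S : SetName P), IsSetName P S ∧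
        ForcesPos P D q S ∧ ForcesFNotPos P D1 q S :=
  prop_1_12_general kappa lam D D1 P K hstar7
end
end
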